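/- arXiv:2205.00851 — 7 statements merged into one kernel-verified Lean document; each statement's English description precedes it below -/
import Mathlib

section
/- For all n ≥ 4, 2^n ≥ f_n^2 / f_{n-2}, equivalently 2^n · f_{n-2} ≥ f_n^2, where f is the Fibonacci sequence. -/
lemma fib_add_two_le_two_pow (n : ℕ) : Nat.fib (n + 2) ≤ 2 ^ n := by
  induction n using Nat.twoStepInduction with
  | zero => simp
  | one => simp [Nat.fib]
  | more n ih1 ih2 =>
    rw [Nat.fib_add_two]
    calc Nat.fib (n + 2) + Nat.fib (n + 2 + 1) ≤ 2 ^ n + 2 ^ (n + 1) := by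
          exact Nat.add_le_add ih1 ih2
      _ ≤ 2 ^ (n + 2) := by ring_nf; omega

lemma fib_add_two_le_three_mul (n : ℕ) (hn : 1 ≤ n) :
    Nat.fib (n + 2) ≤ 3 * Nat.fib n := by
  rw [Nat.fib_add_two, Nat.fib_add_one (by omega)]
  have h : Nat.fib (n - 1) ≤ Nat.fib n := Nat.fib_mono (by omega)
  omega

/-- For all `n ≥ 4`, `2^n ≥ f_n^2 / f_{n-2}`, equivalently
`2^n * f_{n-2} ≥ f_n^2`, where `f` is the Fibonacci sequence. -/
theorem fib_sq_le_two_pow_mul (n : ℕ) (hn : 4 ≤ n) :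
    Nat.fib n ^ 2 ≤ 2 ^ n * Nat.fib (n - 2) := by
  obtain ⟨m, rfl⟩ : ∃ m, n = m + 4 := ⟨n - 4, by omega⟩
  have h1 : Nat.fib (m + 4) ≤ 2 ^ (m + 2) := fib_add_two_le_two_pow (m + 2)
  have h2 : Nat.fib (m + 4) ≤ 3 * Nat.fib (m + 2) := fib_add_two_le_three_mul (m + 2) (by omega)
  have : m + 4 - 2 = m + 2 := by omega
  rw [this, pow_two]
  calc Nat.fib (m + 4) * Nat.fib (m + 4) ≤ (2 ^ (m + 2)) * (3 * Nat.fib (m + 2)) :=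
        Nat.mul_le_mul h1 h2
    _ ≤ 2 ^ (m + 4) * Nat.fib (m + 2) := by ring_nf; nlinarith [Nat.zero_le (Nat.fib (2+m) * 2^m)]
end

section
/- For all n ≥ 48, 2^n ≥ 10 · f_n^5 / f_{n-2}^4, equivalently 2^n · f_{n-2}^4 ≥ 10 · f_n^5, where f is the Fibonacci sequence. -/
lemma aux810 : ∀ k, 810 * Nat.fib (48 + k) ≤ 2 ^ (48 + k) ∧
    810 * Nat.fib (48 + (k+1)) ≤ 2 ^ (48 + (k+1)) := by
  intro k
  induction k with
  | zero => exact ⟨by decide, by decide⟩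
  | succ m ih =>
    refine ⟨ih.2, ?_⟩
    have h : 48 + (m + 1 + 1) = (48 + m) + 2 := by ring
    rw [h, Nat.fib_add_two, Nat.mul_add]
    have h1 := ih.1
    have h2 := ih.2
    rw [show 48 + (m+1) = (48+m) + 1 from rfl, pow_succ] at h2
    have : (2:ℕ) ^ ((48 + m) + 2) = 2 ^ (48+m) + 2^(48+m) * 2 + 2^(48+m) := by ring
    rw [this]
    omega

lemma fib_le_three (n : ℕ) : Nat.fib (n + 3) ≤ 3 * Nat.fib (n+1) := by
  have e1 : n + 3 = (n+1) + 2 := by ring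
  rw [e1, Nat.fib_add_two, Nat.fib_add_two]
  have := Nat.fib_mono (show n ≤ n + 1 by omega)
  omega

/-- For all `n ≥ 48`, `2^n ≥ 10 * f_n^5 / f_{n-2}^4`, equivalently
`2^n * f_{n-2}^4 ≥ 10 * f_n^5`, where `f` is the Fibonacci sequence. -/
theorem fib_ineq_two_pow_ten (n : ℕ) (hn : 48 ≤ n) :
    10 * Nat.fib n ^ 5 ≤ 2 ^ n * Nat.fib (n - 2) ^ 4 := by
  obtain ⟨m, rfl⟩ : ∃ m, n = (m + 1) + 2 := ⟨n - 3, by omega⟩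
  simp only [Nat.add_sub_cancel]
  have h1 : Nat.fib (m + 3) ≤ 3 * Nat.fib (m+1) := fib_le_three m
  have h2 : 810 * Nat.fib (m + 3) ≤ 2 ^ (m + 3) := by
    obtain ⟨k, rfl⟩ : ∃ k, m = 45 + k := ⟨m - 45, by omega⟩
    have e : 45 + k + 3 = 48 + k := by ring
    rw [e]
    exact (aux810 k).1
  have e2 : m + 1 + 2 = m + 3 := by ring
  rw [e2]
  calc 10 * Nat.fib (m+3) ^ 5 = 10 * Nat.fib (m+3) ^ 4 * Nat.fib (m+3) := by ring
    _ ≤ 10 * (3 * Nat.fib (m+1)) ^ 4 * Nat.fib (m+3) := by gcongr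
    _ = 810 * Nat.fib (m+3) * Nat.fib (m+1) ^ 4 := by ring
    _ ≤ 2 ^ (m+3) * Nat.fib (m+1) ^ 4 := by gcongr
end

section
/- Concatenation formula for matchings of paths: for probabilities ρ ∈ [0,1]^n and ρ' ∈ [0,1]^{n'} and for all b, b' ∈ {0,1}, we have Π_{n+n'}^{bb'}(ρ, ρ') = Π_n^{b0}(ρ) · Π_{n'}^{1b'}(ρ') + Π_n^{b1}(ρ) · Π_{n'}^{0b'}(ρ') − Π_n^{b1}(ρ) · Π_{n'}^{1b'}(ρ'). -/
open scoped Classical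

/-- The probability that a random edge subset of the path with `n` edges
(edge `i` present independently with probability `ρ i`) is a matching,
where additionally the first edge is forced absent if `b = true` and the
last edge is forced absent if `b' = true`. -/
noncomputable def pathMatchProb (n : ℕ) (ρ : Fin n → ℝ) (b b' : Bool) : ℝ :=
  ∑ S : Finset (Fin n),
    if ((∀ i ∈ S, ∀ j ∈ S, (i : ℕ) + 1 ≠ (j : ℕ)) ∧
        (b = true → ∀ i ∈ S, (i : ℕ) ≠ 0) ∧
        (b' = true → ∀ i ∈ S, (i : ℕ) ≠ n - 1))
    then (∏ i ∈ S, ρ i) * ∏ i ∈ Sᶜ, (1 - ρ i)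
    else 0

section PMAux

variable {n n' : ℕ}

/-- Left embedding of edges. -/
def pmEmbL (n n' : ℕ) : Fin n ↪ Fin (n + n') :=
  ⟨Fin.castAdd n', fun i j h => Fin.val_injective (by simpa using congrArg Fin.val h)⟩

/-- Right embedding of edges. -/
def pmEmbR (n n' : ℕ) : Fin n' ↪ Fin (n + n') :=
  ⟨Fin.natAdd n, fun i j h => Fin.val_injective (by simpa using congrArg Fin.val h)⟩

/-- Combine two edge subsets into a subset of the concatenated path. -/
def pmF (S₁ : Finset (Fin n)) (S₂ : Finset (Fin n')) : Finset (Fin (n + n')) :=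
  S₁.map (pmEmbL n n') ∪ S₂.map (pmEmbR n n')

lemma mem_pmF_castAdd {S₁ : Finset (Fin n)} {S₂ : Finset (Fin n')} (i : Fin n) :
    Fin.castAdd n' i ∈ pmF S₁ S₂ ↔ i ∈ S₁ := by
  simp only [pmF, Finset.mem_union, Finset.mem_map, pmEmbL, pmEmbR,
    Function.Embedding.coeFn_mk]
  constructor
  · rintro (⟨a, ha, hai⟩ | ⟨a, ha, hai⟩)
    · rwa [show a = i from Fin.val_injective (by simpa using congrArg Fin.val (show Fin.castAdd n' a = Fin.castAdd n' i from hai))] at ha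
    · exfalso
      have h1 := congrArg Fin.val (show Fin.natAdd n a = Fin.castAdd n' i from hai)
      have h2 := i.isLt
      simp at h1; omega
  · intro h; exact Or.inl ⟨i, h, rfl⟩

lemma mem_pmF_natAdd {S₁ : Finset (Fin n)} {S₂ : Finset (Fin n')} (j : Fin n') :
    Fin.natAdd n j ∈ pmF S₁ S₂ ↔ j ∈ S₂ := by
  simp only [pmF, Finset.mem_union, Finset.mem_map, pmEmbL, pmEmbR,
    Function.Embedding.coeFn_mk]
  constructor
  · rintro (⟨a, ha, hai⟩ | ⟨a, ha, hai⟩)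
    · exfalso
      have h1 := congrArg Fin.val (show Fin.castAdd n' a = Fin.natAdd n j from hai)
      have h2 := a.isLt
      simp at h1; omega
    · rwa [show a = j from Fin.val_injective (by simpa using congrArg Fin.val (show Fin.natAdd n a = Fin.natAdd n j from hai))] at ha
  · intro h; exact Or.inr ⟨j, h, rfl⟩

/-- The equivalence between pairs of subsets and subsets of the concatenation. -/
noncomputable def pmE (n n' : ℕ) :
    Finset (Fin n) × Finset (Fin n') ≃ Finset (Fin (n + n')) where
  toFun p := pmF p.1 p.2
  invFun S := (Finset.univ.filter fun i => Fin.castAdd n' i ∈ S,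
               Finset.univ.filter fun j => Fin.natAdd n j ∈ S)
  left_inv p := by
    ext x
    · simp [mem_pmF_castAdd]
    · simp [mem_pmF_natAdd]
  right_inv S := by
    ext x
    induction x using Fin.addCases with
    | left i => simp [mem_pmF_castAdd]
    | right j => simp [mem_pmF_natAdd]

lemma pmF_compl (S₁ : Finset (Fin n)) (S₂ : Finset (Fin n')) :
    (pmF S₁ S₂)ᶜ = pmF S₁ᶜ S₂ᶜ := by
  ext x
  induction x using Fin.addCases with
  | left i => simp [mem_pmF_castAdd]
  | right j => simp [mem_pmF_natAdd]

lemma pmF_disjoint (S₁ : Finset (Fin n)) (S₂ : Finset (Fin n')) :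
    Disjoint (S₁.map (pmEmbL n n')) (S₂.map (pmEmbR n n')) := by
  rw [Finset.disjoint_left]
  rintro x hx₁ hx₂
  simp only [Finset.mem_map, pmEmbL, pmEmbR, Function.Embedding.coeFn_mk] at hx₁ hx₂
  obtain ⟨a, -, rfl⟩ := hx₁
  obtain ⟨c, -, hc⟩ := hx₂
  have h1 := congrArg Fin.val (show Fin.natAdd n c = Fin.castAdd n' a from hc)
  have h2 := a.isLt
  simp at h1; omega

lemma prod_pmF (S₁ : Finset (Fin n)) (S₂ : Finset (Fin n')) (g : Fin (n + n') → ℝ) :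
    ∏ x ∈ pmF S₁ S₂, g x =
      (∏ i ∈ S₁, g (Fin.castAdd n' i)) * ∏ j ∈ S₂, g (Fin.natAdd n j) := by
  rw [pmF, Finset.prod_union (pmF_disjoint S₁ S₂), Finset.prod_map, Finset.prod_map]
  rfl

end PMAux

set_option maxHeartbeats 1000000 in
/-- Concatenation formula for matching probabilities of paths:
`Π_{n+n'}^{bb'}(ρ, ρ') = Π_n^{b0}(ρ) Π_{n'}^{1b'}(ρ') + Π_n^{b1}(ρ) Π_{n'}^{0b'}(ρ')
− Π_n^{b1}(ρ) Π_{n'}^{1b'}(ρ')`. -/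
theorem pathMatchProb_append (n n' : ℕ) (hn : 1 ≤ n) (hn' : 1 ≤ n')
    (ρ : Fin n → ℝ) (ρ' : Fin n' → ℝ)
    (hρ : ∀ i, ρ i ∈ Set.Icc (0 : ℝ) 1) (hρ' : ∀ i, ρ' i ∈ Set.Icc (0 : ℝ) 1)
    (b b' : Bool) :
    pathMatchProb (n + n') (Fin.append ρ ρ') b b' =
      pathMatchProb n ρ b false * pathMatchProb n' ρ' true b'
      + pathMatchProb n ρ b true * pathMatchProb n' ρ' false b'
      - pathMatchProb n ρ b true * pathMatchProb n' ρ' true b' := by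
  classical
  -- weights
  set W : Finset (Fin (n + n')) → ℝ :=
    fun S => (∏ i ∈ S, Fin.append ρ ρ' i) * ∏ i ∈ Sᶜ, (1 - Fin.append ρ ρ' i) with hW
  set W₁ : Finset (Fin n) → ℝ := fun S => (∏ i ∈ S, ρ i) * ∏ i ∈ Sᶜ, (1 - ρ i) with hW₁
  set W₂ : Finset (Fin n') → ℝ := fun S => (∏ i ∈ S, ρ' i) * ∏ i ∈ Sᶜ, (1 - ρ' i) with hW₂
  -- distinguished boundary edges
  set eL : Fin n := ⟨n - 1, by omega⟩ with heL
  set eR : Fin n' := ⟨0, by omega⟩ with heR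
  have hWsplit : ∀ (S₁ : Finset (Fin n)) (S₂ : Finset (Fin n')),
      W (pmF S₁ S₂) = W₁ S₁ * W₂ S₂ := by
    intro S₁ S₂
    rw [hW, hW₁, hW₂]
    simp only [pmF_compl, prod_pmF, Fin.append_left, Fin.append_right]
    ring
  -- matching condition splits
  have hMatch : ∀ (S₁ : Finset (Fin n)) (S₂ : Finset (Fin n')),
      (∀ i ∈ pmF S₁ S₂, ∀ j ∈ pmF S₁ S₂, (i : ℕ) + 1 ≠ (j : ℕ)) ↔
        ((∀ i ∈ S₁, ∀ j ∈ S₁, (i : ℕ) + 1 ≠ (j : ℕ)) ∧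
         (∀ i ∈ S₂, ∀ j ∈ S₂, (i : ℕ) + 1 ≠ (j : ℕ)) ∧
         ¬(eL ∈ S₁ ∧ eR ∈ S₂)) := by
    intro S₁ S₂
    constructor
    · intro h
      refine ⟨fun i hi j hj => ?_, fun i hi j hj => ?_, fun ⟨h1, h2⟩ => ?_⟩
      · have := h _ ((mem_pmF_castAdd i).2 hi) _ ((mem_pmF_castAdd j).2 hj)
        simpa using this
      · have := h _ ((mem_pmF_natAdd i).2 hi) _ ((mem_pmF_natAdd j).2 hj)
        simp only [Fin.coe_natAdd] at this
        omega
      · have := h _ ((mem_pmF_castAdd eL).2 h1) _ ((mem_pmF_natAdd eR).2 h2)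
        simp only [Fin.coe_castAdd, Fin.coe_natAdd, heL, heR] at this
        omega
    · rintro ⟨h1, h2, h3⟩ x hx y hy
      induction x using Fin.addCases with
      | left i =>
        induction y using Fin.addCases with
        | left j =>
          have := h1 i ((mem_pmF_castAdd i).1 hx) j ((mem_pmF_castAdd j).1 hy)
          simpa using this
        | right j =>
          simp only [Fin.coe_castAdd, Fin.coe_natAdd]
          intro hij
          have hiS := (mem_pmF_castAdd i).1 hx
          have hjS := (mem_pmF_natAdd j).1 hy
          have hi' : i = eL := Fin.val_injective (by simp only [heL]; omega)
          have hj' : j = eR := Fin.val_injective (by simp only [heR]; omega)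
          exact h3 ⟨hi' ▸ hiS, hj' ▸ hjS⟩
      | right i =>
        induction y using Fin.addCases with
        | left j =>
          have := j.isLt
          simp only [Fin.coe_castAdd, Fin.coe_natAdd]
          omega
        | right j =>
          have := h2 i ((mem_pmF_natAdd i).1 hx) j ((mem_pmF_natAdd j).1 hy)
          simp only [Fin.coe_castAdd, Fin.coe_natAdd]
          omega
  -- left boundary condition splits
  have hLeft : ∀ (S₁ : Finset (Fin n)) (S₂ : Finset (Fin n')),
      (∀ i ∈ pmF S₁ S₂, (i : ℕ) ≠ 0) ↔ (∀ i ∈ S₁, (i : ℕ) ≠ 0) := by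
    intro S₁ S₂
    constructor
    · intro h i hi
      have := h _ ((mem_pmF_castAdd i).2 hi)
      simpa using this
    · intro h x hx
      induction x using Fin.addCases with
      | left i => simpa using h i ((mem_pmF_castAdd i).1 hx)
      | right j => simp only [Fin.coe_natAdd]; omega
  -- right boundary condition splits
  have hRight : ∀ (S₁ : Finset (Fin n)) (S₂ : Finset (Fin n')),
      (∀ i ∈ pmF S₁ S₂, (i : ℕ) ≠ (n + n') - 1) ↔ (∀ j ∈ S₂, (j : ℕ) ≠ n' - 1) := by
    intro S₁ S₂
    constructor
    · intro h j hj
      have := h _ ((mem_pmF_natAdd j).2 hj)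
      simp only [Fin.coe_natAdd] at this
      omega
    · intro h x hx
      induction x using Fin.addCases with
      | left i =>
        have := i.isLt
        simp only [Fin.coe_castAdd]
        omega
      | right j =>
        have := h j ((mem_pmF_natAdd j).1 hx)
        have := j.isLt
        simp only [Fin.coe_natAdd]
        omega
  -- translate "avoid last edge" as non-membership of eL (and similarly eR)
  have hAvoidL : ∀ (S₁ : Finset (Fin n)), (∀ i ∈ S₁, (i : ℕ) ≠ n - 1) ↔ eL ∉ S₁ := by
    intro S₁
    constructor
    · intro h hmem
      exact h eL hmem (by simp [heL])
    · intro h i hi hval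
      exact h (by rwa [show eL = i from Fin.val_injective (by simp [heL, hval])])
  have hAvoidR : ∀ (S₂ : Finset (Fin n')), (∀ j ∈ S₂, (j : ℕ) ≠ 0) ↔ eR ∉ S₂ := by
    intro S₂
    constructor
    · intro h hmem
      exact h eR hmem (by simp [heR])
    · intro h j hj hval
      exact h (by rwa [show eR = j from Fin.val_injective (by simp [heR, hval])])
  -- key pointwise identity
  have key : ∀ (S₁ : Finset (Fin n)) (S₂ : Finset (Fin n')),
      (if ((∀ i ∈ pmF S₁ S₂, ∀ j ∈ pmF S₁ S₂, (i : ℕ) + 1 ≠ (j : ℕ)) ∧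
          (b = true → ∀ i ∈ pmF S₁ S₂, (i : ℕ) ≠ 0) ∧
          (b' = true → ∀ i ∈ pmF S₁ S₂, (i : ℕ) ≠ (n + n') - 1))
        then W (pmF S₁ S₂) else 0) =
      (if ((∀ i ∈ S₁, ∀ j ∈ S₁, (i : ℕ) + 1 ≠ (j : ℕ)) ∧
          (b = true → ∀ i ∈ S₁, (i : ℕ) ≠ 0) ∧
          ((false : Bool) = true → ∀ i ∈ S₁, (i : ℕ) ≠ n - 1))
        then W₁ S₁ else 0) *
      (if ((∀ i ∈ S₂, ∀ j ∈ S₂, (i : ℕ) + 1 ≠ (j : ℕ)) ∧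
          ((true : Bool) = true → ∀ i ∈ S₂, (i : ℕ) ≠ 0) ∧
          (b' = true → ∀ i ∈ S₂, (i : ℕ) ≠ n' - 1))
        then W₂ S₂ else 0)
      + (if ((∀ i ∈ S₁, ∀ j ∈ S₁, (i : ℕ) + 1 ≠ (j : ℕ)) ∧
          (b = true → ∀ i ∈ S₁, (i : ℕ) ≠ 0) ∧
          ((true : Bool) = true → ∀ i ∈ S₁, (i : ℕ) ≠ n - 1))
        then W₁ S₁ else 0) *
      (if ((∀ i ∈ S₂, ∀ j ∈ S₂, (i : ℕ) + 1 ≠ (j : ℕ)) ∧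
          ((false : Bool) = true → ∀ i ∈ S₂, (i : ℕ) ≠ 0) ∧
          (b' = true → ∀ i ∈ S₂, (i : ℕ) ≠ n' - 1))
        then W₂ S₂ else 0)
      - (if ((∀ i ∈ S₁, ∀ j ∈ S₁, (i : ℕ) + 1 ≠ (j : ℕ)) ∧
          (b = true → ∀ i ∈ S₁, (i : ℕ) ≠ 0) ∧
          ((true : Bool) = true → ∀ i ∈ S₁, (i : ℕ) ≠ n - 1))
        then W₁ S₁ else 0) *
      (if ((∀ i ∈ S₂, ∀ j ∈ S₂, (i : ℕ) + 1 ≠ (j : ℕ)) ∧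
          ((true : Bool) = true → ∀ i ∈ S₂, (i : ℕ) ≠ 0) ∧
          (b' = true → ∀ i ∈ S₂, (i : ℕ) ≠ n' - 1))
        then W₂ S₂ else 0) := by
    intro S₁ S₂
    rw [hWsplit S₁ S₂]
    simp only [hMatch S₁ S₂, hAvoidL S₁, hAvoidR S₂]
    have hL' : (b = true → ∀ i ∈ pmF S₁ S₂, (i : ℕ) ≠ 0) ↔
        (b = true → ∀ i ∈ S₁, (i : ℕ) ≠ 0) := by rw [hLeft S₁ S₂]
    have hR' : (b' = true → ∀ i ∈ pmF S₁ S₂, (i : ℕ) ≠ (n + n') - 1) ↔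
        (b' = true → ∀ j ∈ S₂, (j : ℕ) ≠ n' - 1) := by rw [hRight S₁ S₂]
    simp only [hL', hR']
    simp only [Bool.false_eq_true, false_implies, true_implies, and_true, true_and]
    split_ifs <;>
      first
        | ring1
        | (exfalso
           clear_value W W₁ W₂ eL eR
           clear hWsplit hMatch hLeft hRight hAvoidL hAvoidR hL' hR' hW hW₁ hW₂ hρ hρ' W W₁ W₂ ρ ρ'
           tauto)
  -- assemble
  have h0 : pathMatchProb (n + n') (Fin.append ρ ρ') b b'
      = ∑ p : Finset (Fin n) × Finset (Fin n'),
          (if ((∀ i ∈ pmF p.1 p.2, ∀ j ∈ pmF p.1 p.2, (i : ℕ) + 1 ≠ (j : ℕ)) ∧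
              (b = true → ∀ i ∈ pmF p.1 p.2, (i : ℕ) ≠ 0) ∧
              (b' = true → ∀ i ∈ pmF p.1 p.2, (i : ℕ) ≠ (n + n') - 1))
            then W (pmF p.1 p.2) else 0) :=
    (Fintype.sum_equiv (pmE n n') _ _ (fun p => rfl)).symm
  have h1 : pathMatchProb n ρ b false = ∑ S₁ : Finset (Fin n),
      (if ((∀ i ∈ S₁, ∀ j ∈ S₁, (i : ℕ) + 1 ≠ (j : ℕ)) ∧
          (b = true → ∀ i ∈ S₁, (i : ℕ) ≠ 0) ∧
          ((false : Bool) = true → ∀ i ∈ S₁, (i : ℕ) ≠ n - 1))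
        then W₁ S₁ else 0) := rfl
  have h2 : pathMatchProb n ρ b true = ∑ S₁ : Finset (Fin n),
      (if ((∀ i ∈ S₁, ∀ j ∈ S₁, (i : ℕ) + 1 ≠ (j : ℕ)) ∧
          (b = true → ∀ i ∈ S₁, (i : ℕ) ≠ 0) ∧
          ((true : Bool) = true → ∀ i ∈ S₁, (i : ℕ) ≠ n - 1))
        then W₁ S₁ else 0) := rfl
  have h3 : pathMatchProb n' ρ' true b' = ∑ S₂ : Finset (Fin n'),
      (if ((∀ i ∈ S₂, ∀ j ∈ S₂, (i : ℕ) + 1 ≠ (j : ℕ)) ∧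
          ((true : Bool) = true → ∀ i ∈ S₂, (i : ℕ) ≠ 0) ∧
          (b' = true → ∀ i ∈ S₂, (i : ℕ) ≠ n' - 1))
        then W₂ S₂ else 0) := rfl
  have h4 : pathMatchProb n' ρ' false b' = ∑ S₂ : Finset (Fin n'),
      (if ((∀ i ∈ S₂, ∀ j ∈ S₂, (i : ℕ) + 1 ≠ (j : ℕ)) ∧
          ((false : Bool) = true → ∀ i ∈ S₂, (i : ℕ) ≠ 0) ∧
          (b' = true → ∀ i ∈ S₂, (i : ℕ) ≠ n' - 1))
        then W₂ S₂ else 0) := rfl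
  rw [h0, h1, h2, h3, h4]
  simp only [key]
  rw [Fintype.sum_prod_type]
  simp only [Finset.sum_add_distrib, Finset.sum_sub_distrib, ← Finset.mul_sum,
    ← Finset.sum_mul]
end

section
/- For n ≥ 1 and edge probabilities ρ ∈ [0,1]^n on the path with n edges, let D = Π_n^{01}(ρ)·Π_n^{10}(ρ) − Π_n^{00}(ρ)·Π_n^{11}(ρ). Then D = 0 if and only if some ρ_i ∈ {0,1}; otherwise D > 0 if n is even and D < 0 if n is odd. -/
open scoped Classical

namespace PathMatchAux

open Finset

lemma sum_finset_fin_succ {M : Type*} [AddCommMonoid M] (n : ℕ) (f : Finset (Fin (n+1)) → M) :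
    ∑ S : Finset (Fin (n+1)), f S =
      (∑ T : Finset (Fin n), f (T.map Fin.castSuccEmb)) +
      ∑ T : Finset (Fin n), f (insert (Fin.last n) (T.map Fin.castSuccEmb)) := by
  have key : ∀ g : Finset (Fin (n+1)) → M,
      ∑ S ∈ ((univ : Finset (Fin n)).map Fin.castSuccEmb).powerset, g S
        = ∑ T : Finset (Fin n), g (T.map Fin.castSuccEmb) := by
    intro g
    rw [show ((univ : Finset (Fin n)).map Fin.castSuccEmb).powerset
        = (univ : Finset (Finset (Fin n))).map
            ⟨fun T => T.map Fin.castSuccEmb, fun _ _ h => Finset.map_injective _ h⟩ from ?_,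
      Finset.sum_map]
    · rfl
    · ext S
      simp only [Finset.mem_powerset, Finset.mem_map, Finset.mem_univ, true_and,
        Function.Embedding.coeFn_mk]
      constructor
      · intro hS
        rcases Finset.subset_map_iff.mp hS with ⟨u, -, rfl⟩
        exact ⟨u, rfl⟩
      · rintro ⟨u, rfl⟩
        exact Finset.map_subset_map.mpr (Finset.subset_univ u)
  have hlast : Fin.last n ∉ (univ : Finset (Fin n)).map Fin.castSuccEmb := by
    intro h
    rcases Finset.mem_map.mp h with ⟨x, -, hx⟩
    exact (Fin.castSucc_lt_last x).ne hx
  rw [← Finset.powerset_univ, Fin.univ_castSuccEmb, Finset.cons_eq_insert,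
    Finset.sum_powerset_insert hlast, key, key]

lemma notmem_map_castSucc (n : ℕ) (T : Finset (Fin n)) :
    Fin.last n ∉ T.map Fin.castSuccEmb := by
  intro h
  rcases Finset.mem_map.mp h with ⟨x, -, hx⟩
  exact (Fin.castSucc_lt_last x).ne hx

lemma compl_map_castSucc (n : ℕ) (T : Finset (Fin n)) :
    (T.map Fin.castSuccEmb)ᶜ = insert (Fin.last n) (Tᶜ.map Fin.castSuccEmb) := by
  ext x
  induction x using Fin.lastCases with
  | last =>
    simp only [Finset.mem_compl, Finset.mem_insert, true_or, iff_true]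
    exact notmem_map_castSucc n T
  | cast y =>
    simp only [Finset.mem_compl, Finset.mem_insert, Finset.mem_map, Fin.coe_castSuccEmb]
    constructor
    · intro h
      exact Or.inr ⟨y, fun hy => h ⟨y, hy, rfl⟩, rfl⟩
    · rintro (h | ⟨z, hz, hzy⟩)
      · exact absurd h (Fin.castSucc_lt_last y).ne
      · have : z = y := Fin.castSucc_injective n hzy
        subst this
        rintro ⟨w, hw, hwy⟩
        exact hz (by rwa [Fin.castSucc_injective n hwy] at hw)

lemma pathMatchProb_succ (n : ℕ) (hn : 1 ≤ n) (ρ : Fin (n+1) → ℝ) (b b' : Bool) :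
    pathMatchProb (n+1) ρ b b' =
      (1 - ρ (Fin.last n)) * pathMatchProb n (fun i => ρ i.castSucc) b false
      + (if b' = true then 0 else ρ (Fin.last n) * pathMatchProb n (fun i => ρ i.castSucc) b true) := by
  unfold pathMatchProb
  rw [sum_finset_fin_succ]
  congr 1
  · rw [Finset.mul_sum]
    refine Finset.sum_congr rfl fun T _ => ?_
    have hcond : ((∀ i ∈ T.map Fin.castSuccEmb, ∀ j ∈ T.map Fin.castSuccEmb, (i : ℕ) + 1 ≠ (j : ℕ)) ∧
        (b = true → ∀ i ∈ T.map Fin.castSuccEmb, (i : ℕ) ≠ 0) ∧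
        (b' = true → ∀ i ∈ T.map Fin.castSuccEmb, (i : ℕ) ≠ (n+1) - 1)) ↔
        ((∀ i ∈ T, ∀ j ∈ T, (i : ℕ) + 1 ≠ (j : ℕ)) ∧
        (b = true → ∀ i ∈ T, (i : ℕ) ≠ 0) ∧
        ((false : Bool) = true → ∀ i ∈ T, (i : ℕ) ≠ n - 1)) := by
      simp only [Finset.forall_mem_map, Fin.coe_castSuccEmb, Fin.coe_castSucc]
      constructor
      · rintro ⟨h1, h2, -⟩
        exact ⟨h1, h2, by simp⟩
      · rintro ⟨h1, h2, -⟩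
        refine ⟨h1, h2, fun _ i hi => ?_⟩
        have := i.isLt; omega
    rw [if_congr hcond rfl rfl]
    have hprod : (∏ i ∈ T.map Fin.castSuccEmb, ρ i) * ∏ i ∈ (T.map Fin.castSuccEmb)ᶜ, (1 - ρ i)
        = (1 - ρ (Fin.last n)) * ((∏ i ∈ T, ρ i.castSucc) * ∏ i ∈ Tᶜ, (1 - ρ i.castSucc)) := by
      rw [compl_map_castSucc, Finset.prod_insert (notmem_map_castSucc n Tᶜ),
        Finset.prod_map, Finset.prod_map]
      simp only [Fin.coe_castSuccEmb]
      ring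
    rw [hprod, mul_ite, mul_zero]
  · by_cases hb' : b' = true
    · subst hb'
      simp only [if_pos rfl]
      refine Finset.sum_eq_zero fun T _ => ?_
      rw [if_neg]
      rintro ⟨-, -, h3⟩
      exact h3 (by trivial) (Fin.last n) (Finset.mem_insert_self _ _) (by simp)
    · have hb'' : b' = false := by simpa using hb'
      subst hb''
      rw [if_neg (by simp), Finset.mul_sum]
      refine Finset.sum_congr rfl fun T _ => ?_
      have hlastmem := notmem_map_castSucc n T
      have hcond : ((∀ i ∈ insert (Fin.last n) (T.map Fin.castSuccEmb),
            ∀ j ∈ insert (Fin.last n) (T.map Fin.castSuccEmb), (i : ℕ) + 1 ≠ (j : ℕ)) ∧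
          (b = true → ∀ i ∈ insert (Fin.last n) (T.map Fin.castSuccEmb), (i : ℕ) ≠ 0) ∧
          ((false : Bool) = true → ∀ i ∈ insert (Fin.last n) (T.map Fin.castSuccEmb), (i : ℕ) ≠ (n+1) - 1)) ↔
          ((∀ i ∈ T, ∀ j ∈ T, (i : ℕ) + 1 ≠ (j : ℕ)) ∧
          (b = true → ∀ i ∈ T, (i : ℕ) ≠ 0) ∧
          ((true : Bool) = true → ∀ i ∈ T, (i : ℕ) ≠ n - 1)) := by
        constructor
        · rintro ⟨h1, h2, -⟩
          refine ⟨?_, ?_, fun _ i hi => ?_⟩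
          · intro i hi j hj
            have := h1 i.castSucc (Finset.mem_insert_of_mem (Finset.mem_map_of_mem _ hi))
              j.castSucc (Finset.mem_insert_of_mem (Finset.mem_map_of_mem _ hj))
            simpa using this
          · intro hb i hi
            have := h2 hb i.castSucc (Finset.mem_insert_of_mem (Finset.mem_map_of_mem _ hi))
            simpa using this
          · have := h1 i.castSucc (Finset.mem_insert_of_mem (Finset.mem_map_of_mem _ hi))
              (Fin.last n) (Finset.mem_insert_self _ _)
            simp only [Fin.coe_castSucc, Fin.val_last] at this
            omega
        · rintro ⟨h1, h2, h3⟩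
          refine ⟨?_, ?_, by simp⟩
          · intro i hi j hj
            rcases Finset.mem_insert.mp hi with rfl | hi'
            · rcases Finset.mem_insert.mp hj with rfl | hj'
              · simp
              · rcases Finset.mem_map.mp hj' with ⟨y, hy, rfl⟩
                have := y.isLt
                simp only [Fin.val_last, Fin.coe_castSuccEmb, Fin.coe_castSucc]
                omega
            · rcases Finset.mem_map.mp hi' with ⟨x, hx, rfl⟩
              rcases Finset.mem_insert.mp hj with rfl | hj'
              · have := h3 rfl x hx
                have hx2 := x.isLt
                simp only [Fin.val_last, Fin.coe_castSuccEmb, Fin.coe_castSucc]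
                omega
              · rcases Finset.mem_map.mp hj' with ⟨y, hy, rfl⟩
                exact h1 x hx y hy
          · intro hb i hi
            rcases Finset.mem_insert.mp hi with rfl | hi'
            · simp only [Fin.val_last]; omega
            · rcases Finset.mem_map.mp hi' with ⟨x, hx, rfl⟩
              exact h2 hb x hx
      rw [if_congr hcond rfl rfl]
      have hprod : (∏ i ∈ insert (Fin.last n) (T.map Fin.castSuccEmb), ρ i) *
          ∏ i ∈ (insert (Fin.last n) (T.map Fin.castSuccEmb))ᶜ, (1 - ρ i)
          = ρ (Fin.last n) * ((∏ i ∈ T, ρ i.castSucc) * ∏ i ∈ Tᶜ, (1 - ρ i.castSucc)) := by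
        rw [Finset.prod_insert hlastmem, Finset.compl_insert, compl_map_castSucc,
          Finset.erase_insert (notmem_map_castSucc n Tᶜ), Finset.prod_map, Finset.prod_map]
        simp only [Fin.coe_castSuccEmb]
        ring
      rw [hprod, mul_ite, mul_zero]

lemma pathMatchProb_one (ρ : Fin 1 → ℝ) (b b' : Bool) :
    pathMatchProb 1 ρ b b' = if (b || b') = true then 1 - ρ 0 else 1 := by
  unfold pathMatchProb
  rw [show (univ : Finset (Finset (Fin 1))) = {∅, {0}} from by decide]
  rw [Finset.sum_insert (by decide), Finset.sum_singleton]
  rcases b <;> rcases b' <;>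
    simp [Finset.compl_empty, Fin.prod_univ_one,
      show ({0}ᶜ : Finset (Fin 1)) = ∅ from by decide]

lemma det_one (ρ : Fin 1 → ℝ) :
    pathMatchProb 1 ρ false true * pathMatchProb 1 ρ true false
      - pathMatchProb 1 ρ false false * pathMatchProb 1 ρ true true
    = (-1 : ℝ)^1 * ∏ i, ρ i * (1 - ρ i) := by
  rw [pathMatchProb_one, pathMatchProb_one, pathMatchProb_one, pathMatchProb_one]
  norm_num [Fin.prod_univ_one]
  ring

lemma det_formula (n : ℕ) (hn : 1 ≤ n) (ρ : Fin n → ℝ) :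
    pathMatchProb n ρ false true * pathMatchProb n ρ true false
      - pathMatchProb n ρ false false * pathMatchProb n ρ true true
    = (-1 : ℝ)^n * ∏ i, ρ i * (1 - ρ i) := by
  induction n with
  | zero => omega
  | succ m ih =>
    rcases Nat.lt_or_ge m 1 with hm | hm
    · interval_cases m
      exact det_one ρ
    · have ih' := ih hm (fun i => ρ i.castSucc)
      rw [pathMatchProb_succ m hm ρ false true, pathMatchProb_succ m hm ρ true false,
        pathMatchProb_succ m hm ρ false false, pathMatchProb_succ m hm ρ true true,
        Fin.prod_univ_castSucc]
      norm_num
      rw [pow_succ]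
      linear_combination (-(ρ (Fin.last m)) * (1 - ρ (Fin.last m))) * ih'

end PathMatchAux

/-- The "determinant-style" quantity
`D = Π_n^{01}(ρ) Π_n^{10}(ρ) − Π_n^{00}(ρ) Π_n^{11}(ρ)` is zero iff some `ρ i` is `0`
or `1`; otherwise it is positive if `n` is even and negative if `n` is odd. -/
theorem pathMatchProb_det_sign (n : ℕ) (hn : 1 ≤ n) (ρ : Fin n → ℝ)
    (hρ : ∀ i, ρ i ∈ Set.Icc (0 : ℝ) 1) :
    (pathMatchProb n ρ false true * pathMatchProb n ρ true false
        - pathMatchProb n ρ false false * pathMatchProb n ρ true true = 0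
      ↔ ∃ i, ρ i = 0 ∨ ρ i = 1) ∧
    ((∀ i, ρ i ≠ 0 ∧ ρ i ≠ 1) →
      (Even n →
        0 < pathMatchProb n ρ false true * pathMatchProb n ρ true false
            - pathMatchProb n ρ false false * pathMatchProb n ρ true true) ∧
      (Odd n →
        pathMatchProb n ρ false true * pathMatchProb n ρ true false
            - pathMatchProb n ρ false false * pathMatchProb n ρ true true < 0)) := by
  rw [PathMatchAux.det_formula n hn ρ]
  have hpow : (-1 : ℝ)^n ≠ 0 := by
    intro h
    exact absurd (pow_eq_zero_iff (by omega) |>.mp h) (by norm_num)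
  constructor
  · rw [mul_eq_zero]
    constructor
    · rintro (h | h)
      · exact absurd h hpow
      · rcases Finset.prod_eq_zero_iff.mp h with ⟨i, -, hi⟩
        rcases mul_eq_zero.mp hi with h0 | h1
        · exact ⟨i, Or.inl h0⟩
        · exact ⟨i, Or.inr (by linarith)⟩
    · rintro ⟨i, h0 | h1⟩
      · exact Or.inr (Finset.prod_eq_zero (Finset.mem_univ i) (by rw [h0]; ring))
      · exact Or.inr (Finset.prod_eq_zero (Finset.mem_univ i) (by rw [h1]; ring))
  · intro h
    have hprod : 0 < ∏ i, ρ i * (1 - ρ i) := by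
      refine Finset.prod_pos fun i _ => mul_pos ?_ ?_
      · rcases (hρ i).1.lt_or_eq with h' | h'
        · exact h'
        · exact absurd h'.symm (h i).1
      · rcases (hρ i).2.lt_or_eq with h' | h'
        · linarith
        · exact absurd h' (h i).2
    constructor
    · intro he
      rw [he.neg_one_pow]
      linarith
    · intro ho
      rw [ho.neg_one_pow]
      linarith
end

section
/- Let i ≥ 4 be an even integer and f the Fibonacci sequence. Suppose reals p, q, r, s satisfy: p(1−q)(1−s) = f_{i-1}/2^i, s(1−r)(1−p) = f_{i-1}/2^i, q·r = 1/f_{i-1}^2, and (1−p)(1−s) = f_{i-1}^2/(2^i · f_{i-2}). Then: Π_4^{00}(p,q,r,s) = f_{i+2}/2^i, Π_4^{01}(p,q,r,s) = Π_4^{10}(p,q,r,s) = f_{i+1}/2^i, and Π_4^{11}(p,q,r,s) = f_i/2^i. -/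
/-- `Π_4^{11}` as a polynomial in the edge probabilities. -/
def Pi11 (p q r s : ℝ) : ℝ := (1 - p) * (1 - s) * (1 - q * r)

/-- `Π_4^{01}` as a polynomial in the edge probabilities. -/
def Pi01 (p q r s : ℝ) : ℝ := Pi11 p q r s + p * (1 - q) * (1 - s)

/-- `Π_4^{10}` as a polynomial in the edge probabilities. -/
def Pi10 (p q r s : ℝ) : ℝ := Pi11 p q r s + s * (1 - r) * (1 - p)

/-- `Π_4^{00}` as a polynomial in the edge probabilities. -/
def Pi00 (p q r s : ℝ) : ℝ :=
  Pi11 p q r s + p * s * (1 - q) * (1 - r) + p * (1 - q) * (1 - s) + s * (1 - r) * (1 - p)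

/-- Cassini's identity over the integers. -/
lemma cassini (n : ℕ) :
    (Nat.fib (n + 1) : ℤ) ^ 2 = (Nat.fib (n + 2) : ℤ) * (Nat.fib n : ℤ) + (-1) ^ n := by
  induction n with
  | zero => simp
  | succ k ih =>
      have hk2 : (Nat.fib (k + 2) : ℤ) = Nat.fib k + Nat.fib (k + 1) := by
        rw [Nat.fib_add_two]; push_cast; ring
      have hk3 : (Nat.fib (k + 3) : ℤ) = Nat.fib (k + 1) + Nat.fib (k + 2) := by
        rw [show k + 3 = (k + 1) + 2 from rfl, Nat.fib_add_two]; push_cast; ring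
      rw [hk3]
      rw [hk2] at ih ⊢
      ring_nf
      ring_nf at ih
      linear_combination -ih

/-- If `i ≥ 4` is even and `p, q, r, s` satisfy the system (E), then the 4-edge path
with probabilities `p,q,r,s` behaves like a path of length `i` with probabilities `1/2`. -/
theorem emulation_system_implies_behavior (i : ℕ) (hi : 4 ≤ i) (hieven : Even i)
    (p q r s : ℝ)
    (h1 : p * (1 - q) * (1 - s) = (Nat.fib (i - 1) : ℝ) / 2 ^ i)
    (h2 : s * (1 - r) * (1 - p) = (Nat.fib (i - 1) : ℝ) / 2 ^ i)
    (h3 : q * r = 1 / (Nat.fib (i - 1) : ℝ) ^ 2)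
    (h4 : (1 - p) * (1 - s) = (Nat.fib (i - 1) : ℝ) ^ 2 / (2 ^ i * (Nat.fib (i - 2) : ℝ))) :
    Pi00 p q r s = (Nat.fib (i + 2) : ℝ) / 2 ^ i ∧
    Pi01 p q r s = (Nat.fib (i + 1) : ℝ) / 2 ^ i ∧
    Pi10 p q r s = (Nat.fib (i + 1) : ℝ) / 2 ^ i ∧
    Pi11 p q r s = (Nat.fib i : ℝ) / 2 ^ i := by
  obtain ⟨j, rfl⟩ : ∃ j, i = j + 4 := ⟨i - 4, by omega⟩
  have hjeven : Even j := by
    rcases hieven with ⟨m, hm⟩; exact ⟨m - 2, by omega⟩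
  simp only [show j + 4 - 1 = j + 3 from rfl, show j + 4 - 2 = j + 2 from rfl] at h1 h2 h3 h4
  set F : ℝ := (Nat.fib (j + 3) : ℝ) with hF
  set G : ℝ := (Nat.fib (j + 2) : ℝ) with hG
  have hFpos : 0 < F := by rw [hF]; exact_mod_cast Nat.fib_pos.2 (by omega)
  have hGpos : 0 < G := by rw [hG]; exact_mod_cast Nat.fib_pos.2 (by omega)
  have h2i : (0 : ℝ) < 2 ^ (j + 4) := by positivity
  -- Fibonacci recurrences, cast to ℝ
  have hf4 : (Nat.fib (j + 4) : ℝ) = F + G := by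
    rw [show j + 4 = (j + 2) + 2 from rfl, Nat.fib_add_two]; push_cast; ring
  have hf5 : (Nat.fib (j + 5) : ℝ) = 2 * F + G := by
    rw [show j + 5 = (j + 3) + 2 from rfl, Nat.fib_add_two]; push_cast; rw [hf4]; ring
  have hf6 : (Nat.fib (j + 6) : ℝ) = 3 * F + 2 * G := by
    rw [show j + 6 = (j + 4) + 2 from rfl, Nat.fib_add_two]; push_cast; rw [hf4, hf5]; ring
  -- Cassini: F² = (F+G)·G + 1 since j+2 is even
  have hcas : F ^ 2 = (F + G) * G + 1 := by
    have := cassini (j + 2)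
    have hsign : ((-1 : ℤ)) ^ (j + 2) = 1 := Even.neg_one_pow (by
      rcases hjeven with ⟨m, hm⟩; exact ⟨m + 1, by omega⟩)
    rw [hsign] at this
    have : (Nat.fib (j + 3) : ℝ) ^ 2 = (Nat.fib (j + 4) : ℝ) * (Nat.fib (j + 2) : ℝ) + 1 := by
      exact_mod_cast this
    rw [hf4] at this; exact this
  -- Pi11
  have hPi11 : Pi11 p q r s = (Nat.fib (j + 4) : ℝ) / 2 ^ (j + 4) := by
    unfold Pi11
    rw [h4, h3, hf4]
    field_simp
    linear_combination hcas
  -- the mixed term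
  have hps : p * s * (1 - q) * (1 - r) = G / 2 ^ (j + 4) := by
    have key : (p * (1 - q) * (1 - s)) * (s * (1 - r) * (1 - p)) =
        (p * s * (1 - q) * (1 - r)) * ((1 - p) * (1 - s)) := by ring
    rw [h1, h2, h4] at key
    have h4ne : F ^ 2 / (2 ^ (j + 4) * G) ≠ 0 := by positivity
    field_simp at key
    rw [eq_div_iff (ne_of_gt h2i)]
    apply mul_right_cancel₀ (b := F ^ 2 * 2 ^ (j + 4)) (by positivity)
    linear_combination -(F ^ 2 * 2 ^ (j + 4)) * key
  refine ⟨?_, ?_, ?_, ?_⟩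
  · unfold Pi00
    rw [hPi11, h1, h2, hps, show j + 4 + 2 = j + 6 from rfl, hf6, hf4]
    ring
  · unfold Pi01
    rw [hPi11, h1, show j + 4 + 1 = j + 5 from rfl, hf5, hf4]; ring
  · unfold Pi10
    rw [hPi11, h2, show j + 4 + 1 = j + 5 from rfl, hf5, hf4]; ring
  · rw [hPi11]
end

section
/- Let i ≥ 4 be an even integer. Any tuple of real numbers (p,q,r,s) satisfying p(1−q)(1−s) = f_{i-1}/2^i, s(1−r)(1−p) = f_{i-1}/2^i, q·r = 1/f_{i-1}^2, and (1−p)(1−s) = f_{i-1}^2/(2^i f_{i-2}) must satisfy 0 < p, q, r, s < 1. -/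
private lemma fib_pair (n : ℕ) : Nat.fib (n+3) ≤ 2^(n+1) ∧ Nat.fib (n+4) ≤ 2^(n+2) := by
  induction n with
  | zero => decide
  | succ n ih =>
    obtain ⟨ha, hb⟩ := ih
    refine ⟨by simpa [show n+1+3 = n+4 from rfl] using hb, ?_⟩
    have h3 : Nat.fib (n+5) = Nat.fib (n+3) + Nat.fib (n+4) := Nat.fib_add_two
    have h4 : (2:ℕ)^(n+3) = 2^(n+2) + 2^(n+1) + 2^(n+1) := by ring
    simp only [show n+1+4 = n+5 from rfl, show n+1+2 = n+3 from rfl]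
    omega

private lemma fib_double (n : ℕ) : Nat.fib (n+3) ≤ 2 * Nat.fib (n+2) := by
  have h1 : Nat.fib (n+3) = Nat.fib (n+1) + Nat.fib (n+2) := Nat.fib_add_two
  have h2 : Nat.fib (n+1) ≤ Nat.fib (n+2) := Nat.fib_le_fib_succ
  omega

private lemma fib_key (n : ℕ) :
    (Nat.fib (n+3) + Nat.fib (n+2))^2 ≤ 2^(n+4) * Nat.fib (n+2) := by
  have hF : Nat.fib (n+4) ≤ 2^(n+2) := (fib_pair n).2
  have hFG : Nat.fib (n+4) = Nat.fib (n+2) + Nat.fib (n+3) := Nat.fib_add_two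
  have h3G : Nat.fib (n+3) + Nat.fib (n+2) ≤ 3 * Nat.fib (n+2) := by
    have := fib_double n; omega
  calc (Nat.fib (n+3) + Nat.fib (n+2))^2
      = (Nat.fib (n+3) + Nat.fib (n+2)) * (Nat.fib (n+3) + Nat.fib (n+2)) := sq _
    _ ≤ 2^(n+2) * (3 * Nat.fib (n+2)) := Nat.mul_le_mul (by omega) h3G
    _ = 3 * 2^(n+2) * Nat.fib (n+2) := by ring
    _ ≤ 4 * 2^(n+2) * Nat.fib (n+2) := Nat.mul_le_mul_right _ (by omega)
    _ = 2^(n+4) * Nat.fib (n+2) := by ring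

private lemma aux_p_pos (F G T p q r s : ℝ)
    (hF : 2 ≤ F) (hG : 1 ≤ G) (hFG : F ≤ 2*G)
    (hkey : (F+G)^2 ≤ T*G) (h8 : 8*F ≤ T)
    (H1 : p*(1-q)*(1-s)*T = F) (H2 : s*(1-r)*(1-p)*T = F)
    (H3 : q*r*F^2 = 1) (H4 : (1-p)*(1-s)*(T*G) = F^2) :
    0 < p ∧ p < 1 := by
  have hT : 0 < T := by linarith
  have hF0 : 0 < F := by linarith
  have hG0 : 0 < G := by linarith
  have hprod : 0 < (1-p)*(1-s) := by
    nlinarith [H4, mul_pos hT hG0, mul_pos hF0 hF0]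
  have hp1 : 0 < 1 - p := by
    by_contra hc
    push_neg at hc
    have hs : 1 - s < 0 := by nlinarith [hprod]
    have hp' : 1 - p < 0 := by nlinarith [hprod]
    have hq : 1 - q < 0 := by
      by_contra hq'
      push_neg at hq'
      have hx : 0 ≤ p*(1-q) := mul_nonneg (by linarith) hq'
      have hy : p*(1-q)*(1-s) ≤ 0 := mul_nonpos_of_nonneg_of_nonpos hx hs.le
      have hz : p*(1-q)*(1-s)*T ≤ 0 := mul_nonpos_of_nonpos_of_nonneg hy hT.le
      rw [H1] at hz; linarith
    have hr : 1 - r < 0 := by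
      by_contra hr'
      push_neg at hr'
      have hx : 0 ≤ s*(1-r) := mul_nonneg (by linarith) hr'
      have hy : s*(1-r)*(1-p) ≤ 0 := mul_nonpos_of_nonneg_of_nonpos hx hp'.le
      have hz : s*(1-r)*(1-p)*T ≤ 0 := mul_nonpos_of_nonpos_of_nonneg hy hT.le
      rw [H2] at hz; linarith
    have hq2 : 1 < q := by linarith
    have hr2 : 1 < r := by linarith
    have hqr : 1 < q*r := by nlinarith [mul_pos (show (0:ℝ) < q-1 by linarith) (show (0:ℝ) < r-1 by linarith)]
    have hF4 : 4 ≤ F^2 := by nlinarith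
    nlinarith [H3, hqr, hF4]
  have hs1 : 0 < 1 - s := by nlinarith [hprod, hp1]
  refine ⟨?_, by linarith⟩
  rcases lt_trichotomy p 0 with hp|hp|hp
  · exfalso
    have ha1 : 1 < 1 - p := by linarith
    -- q > 1
    have hq1 : 1 - q < 0 := by
      by_contra hq'
      push_neg at hq'
      have hx : p*(1-q) ≤ 0 := mul_nonpos_of_nonpos_of_nonneg hp.le hq'
      have hy : p*(1-q)*(1-s) ≤ 0 := mul_nonpos_of_nonpos_of_nonneg hx hs1.le
      have hz : p*(1-q)*(1-s)*T ≤ 0 := mul_nonpos_of_nonpos_of_nonneg hy hT.le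
      rw [H1] at hz; linarith
    have hq2 : 1 < q := by linarith
    -- r small positive
    have hr0 : 0 < r := by
      by_contra hr'
      push_neg at hr'
      have hx : q*r ≤ 0 := mul_nonpos_of_nonneg_of_nonpos (by linarith) hr'
      have hy : q*r*F^2 ≤ 0 := mul_nonpos_of_nonpos_of_nonneg hx (by positivity)
      rw [H3] at hy; linarith
    have hF4 : (4:ℝ) ≤ F^2 := by nlinarith
    have hrF : r * F^2 < 1 := by
      linarith [H3, mul_pos (show (0:ℝ) < q - 1 by linarith) (mul_pos hr0 (show (0:ℝ) < F^2 by positivity))]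
    have hr4 : 4*r < 1 := by
      linarith [hrF, mul_nonneg hr0.le (show (0:ℝ) ≤ F^2 - 4 by linarith)]
    -- s positive
    have hs0 : 0 < s := by
      by_contra hs'
      push_neg at hs'
      have hx : s*(1-r) ≤ 0 := mul_nonpos_of_nonpos_of_nonneg hs' (by linarith)
      have hy : s*(1-r)*(1-p) ≤ 0 := mul_nonpos_of_nonpos_of_nonneg hx (by linarith)
      have hz : s*(1-r)*(1-p)*T ≤ 0 := mul_nonpos_of_nonpos_of_nonneg hy hT.le
      rw [H2] at hz; linarith
    -- s*(1-r)*T < F  (since 1-p > 1)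
    have hA : s*(1-r)*T < F := by
      have hx : 0 < s*(1-r)*T := by
        apply mul_pos (mul_pos hs0 (by linarith)) hT
      linarith [H2, mul_pos hx (show (0:ℝ) < (1-p) - 1 by linarith)]
    -- (1-s)*(T*G) < F^2  (since 1-p > 1)
    have hB : (1-s)*(T*G) < F^2 := by
      have hx : 0 < (1-s)*(T*G) := mul_pos hs1 (mul_pos hT hG0)
      linarith [H4, mul_pos hx (show (0:ℝ) < (1-p) - 1 by linarith)]
    -- 9F² ≤ 4TG
    have hC : 9*F^2 ≤ 4*(T*G) := by nlinarith [hkey, sq_nonneg (2*G - F)]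
    have hTG : 0 < T*G := mul_pos hT hG0
    have hs59 : 5/9 < s := by
      by_contra h'
      push_neg at h'
      have h49 : (4:ℝ)/9 ≤ 1 - s := by linarith
      have := mul_le_mul_of_nonneg_right h49 hTG.le
      linarith [hB, hC]
    have hsmall : s*(1-r) < 1/8 := by
      by_contra h'
      push_neg at h'
      have := mul_le_mul_of_nonneg_right h' hT.le
      linarith [hA, h8]
    linarith [hsmall, mul_pos (show (0:ℝ) < s - 5/9 by linarith) (show (0:ℝ) < (1-r) - 3/4 by linarith)]
  · exfalso
    rw [hp] at H1; simp at H1; linarith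
  · exact hp

private lemma aux_q_pos (F G T p q r s : ℝ)
    (hF : 2 ≤ F) (hG : 1 ≤ G)
    (hkey : (F+G)^2 ≤ T*G)
    (H1 : p*(1-q)*(1-s)*T = F) (H2 : s*(1-r)*(1-p)*T = F)
    (H3 : q*r*F^2 = 1) (H4 : (1-p)*(1-s)*(T*G) = F^2)
    (hp : 0 < p) (hp1 : p < 1) (hs : 0 < s) (hs1 : s < 1) :
    0 < q ∧ q < 1 := by
  have hT : 0 < T := by nlinarith [hkey, sq_nonneg (F+G)]
  have hF0 : 0 < F := by linarith
  have hG0 : 0 < G := by linarith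
  have ha : 0 < 1 - p := by linarith
  have hb : 0 < 1 - s := by linarith
  have hq1 : q < 1 := by
    by_contra hc
    push_neg at hc
    have hx : p*(1-q) ≤ 0 := mul_nonpos_of_nonneg_of_nonpos hp.le (by linarith)
    have hy : p*(1-q)*(1-s) ≤ 0 := mul_nonpos_of_nonpos_of_nonneg hx hb.le
    have hz : p*(1-q)*(1-s)*T ≤ 0 := mul_nonpos_of_nonpos_of_nonneg hy hT.le
    rw [H1] at hz; linarith
  refine ⟨?_, hq1⟩
  rcases lt_trichotomy q 0 with hq|hq|hq
  · exfalso
    have hr : r < 0 := by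
      by_contra hr'
      push_neg at hr'
      have hx : q*r ≤ 0 := mul_nonpos_of_nonpos_of_nonneg hq.le hr'
      have hy : q*r*F^2 ≤ 0 := mul_nonpos_of_nonpos_of_nonneg hx (by positivity)
      rw [H3] at hy; linarith
    -- p*(1-s)*T < F and s*(1-p)*T < F
    have hA : p*(1-s)*T < F := by
      have hx : 0 < p*(1-s)*T := mul_pos (mul_pos hp hb) hT
      linarith [H1, mul_pos hx (show (0:ℝ) < -q by linarith)]
    have hB : s*(1-p)*T < F := by
      have hx : 0 < s*(1-p)*T := mul_pos (mul_pos hs ha) hT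
      linarith [H2, mul_pos hx (show (0:ℝ) < -r by linarith)]
    have hsum : ((1-p)+(1-s))*T < 2*F + 2*((1-p)*(1-s))*T := by
      nlinarith [hA, hB]
    have hpos : 0 < ((1-p)+(1-s))*T := mul_pos (by linarith) hT
    have hsq := mul_self_lt_mul_self hpos.le hsum
    have e1 : 4*((1-p)*(1-s))*T^2 < (2*F + 2*((1-p)*(1-s))*T)^2 := by
      nlinarith [hsq, mul_nonneg (mul_nonneg (sq_nonneg ((1-p)-(1-s))) hT.le) hT.le]
    have e1G := mul_lt_mul_of_pos_right e1 (show (0:ℝ) < G^2 by positivity)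
    have eA : ((1-p)*(1-s))*T^2*G^2 = F^2*(T*G) := by linear_combination T*G*H4
    have eB : F*(((1-p)*(1-s))*T*G^2) = F^3*G := by linear_combination F*G*H4
    have eC : ((1-p)*(1-s))^2*T^2*G^2 = F^4 := by
      linear_combination ((1-p)*(1-s)*(T*G) + F^2)*H4
    have hkeyF : 4*F^2*((F+G)^2) ≤ 4*F^2*(T*G) := by
      have h4F : (0:ℝ) ≤ 4*F^2 := by positivity
      exact mul_le_mul_of_nonneg_left hkey h4F
    linarith only [e1G, eA, eB, eC, hkeyF]
  · exfalso
    rw [hq] at H3; simp at H3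
  · exact hq

/-- If `i ≥ 4` is even, any real tuple `(p,q,r,s)` satisfying the system (E)
must lie in `(0,1)^4`. -/
theorem emulation_system_in_unit_interval (i : ℕ) (hi : 4 ≤ i) (hieven : Even i)
    (p q r s : ℝ)
    (h1 : p * (1 - q) * (1 - s) = (Nat.fib (i - 1) : ℝ) / 2 ^ i)
    (h2 : s * (1 - r) * (1 - p) = (Nat.fib (i - 1) : ℝ) / 2 ^ i)
    (h3 : q * r = 1 / (Nat.fib (i - 1) : ℝ) ^ 2)
    (h4 : (1 - p) * (1 - s) = (Nat.fib (i - 1) : ℝ) ^ 2 / (2 ^ i * (Nat.fib (i - 2) : ℝ))) :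
    (0 < p ∧ p < 1) ∧ (0 < q ∧ q < 1) ∧ (0 < r ∧ r < 1) ∧ (0 < s ∧ s < 1) := by
  obtain ⟨k, rfl⟩ : ∃ k, i = k + 4 := ⟨i - 4, by omega⟩
  have e1 : k + 4 - 1 = k + 3 := by omega
  have e2 : k + 4 - 2 = k + 2 := by omega
  rw [e1] at h1 h2 h3
  rw [e1, e2] at h4
  set F : ℝ := (Nat.fib (k+3) : ℝ) with hFdef
  set G : ℝ := (Nat.fib (k+2) : ℝ) with hGdef
  set T : ℝ := (2:ℝ)^(k+4) with hTdef
  have hF : 2 ≤ F := by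
    have h := Nat.fib_mono (show 3 ≤ k+3 by omega)
    rw [hFdef]
    exact_mod_cast h
  have hG : 1 ≤ G := by
    have h : 0 < Nat.fib (k+2) := Nat.fib_pos.mpr (by omega)
    rw [hGdef]
    exact_mod_cast h
  have hFG : F ≤ 2*G := by
    have h := fib_double k
    rw [hFdef, hGdef]
    exact_mod_cast h
  have hkey : (F+G)^2 ≤ T*G := by
    have h := fib_key k
    rw [hFdef, hGdef, hTdef]
    exact_mod_cast h
  have h8 : 8*F ≤ T := by
    have h := (fib_pair k).1
    have h' : 8 * Nat.fib (k+3) ≤ 2^(k+4) := by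
      calc 8 * Nat.fib (k+3) ≤ 8 * 2^(k+1) := by omega
        _ = 2^(k+4) := by ring
    rw [hFdef, hTdef]
    exact_mod_cast h'
  have hT0 : (0:ℝ) < T := by rw [hTdef]; positivity
  have hF0 : (0:ℝ) < F := by linarith
  have hG0 : (0:ℝ) < G := by linarith
  rw [eq_div_iff hT0.ne'] at h1 h2
  rw [eq_div_iff (pow_pos hF0 2).ne'] at h3
  rw [eq_div_iff (mul_pos hT0 hG0).ne'] at h4
  obtain ⟨hp, hp1⟩ := aux_p_pos F G T p q r s hF hG hFG hkey h8 h1 h2 h3 h4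
  obtain ⟨hs, hs1⟩ := aux_p_pos F G T s r q p hF hG hFG hkey h8 h2 h1
    (by linear_combination h3) (by linear_combination h4)
  obtain ⟨hq, hq1⟩ := aux_q_pos F G T p q r s hF hG hkey h1 h2 h3 h4 hp hp1 hs hs1
  obtain ⟨hr, hr1⟩ := aux_q_pos F G T s r q p hF hG hkey h2 h1
    (by linear_combination h3) (by linear_combination h4) hs hs1 hp hp1
  exact ⟨⟨hp, hp1⟩, ⟨hq, hq1⟩, ⟨hr, hr1⟩, ⟨hs, hs1⟩⟩
end

section
/- For edge covers of paths: for all n ≥ 1 and b, b' ∈ {0,1}, the probability that a random subset of the edges of the path with n edges (each edge present independently with probability 1/2) is an edge cover of the internal structure — where an added always-present edge is attached at the left endpoint if b = 1 and at the right endpoint if b' = 1 (so that endpoint need not be covered by the path's edges) — equals f_{n+b+b'} / 2^n, where f is the Fibonacci sequence. -/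
open scoped Classical

def Pred (n : ℕ) (b b' : Bool) (S : Finset (Fin n)) : Prop :=
  (∀ k : ℕ, 1 ≤ k → k ≤ n - 1 → ∃ i ∈ S, (i : ℕ) = k - 1 ∨ (i : ℕ) = k) ∧
  (b = false → ∃ i ∈ S, (i : ℕ) = 0) ∧
  (b' = false → ∃ i ∈ S, (i : ℕ) = n - 1)

noncomputable def cnt (n : ℕ) (b b' : Bool) : ℕ :=
  (Finset.univ.filter (Pred n b b')).card

noncomputable def shift {n : ℕ} (S : Finset (Fin (n+1))) : Finset (Fin n) :=
  Finset.univ.filter (fun j : Fin n => j.succ ∈ S)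

lemma mem_shift {n : ℕ} (S : Finset (Fin (n+1))) (j : Fin n) :
    j ∈ shift S ↔ j.succ ∈ S := by simp [shift]

lemma exists_succ {n : ℕ} (i : Fin (n+1)) (h : (i : ℕ) ≠ 0) :
    ∃ j : Fin n, i = j.succ := by
  refine Fin.eq_succ_of_ne_zero ?_
  rintro rfl; exact h (by simp)

lemma lemA {n : ℕ} (hn : 1 ≤ n) (b b' : Bool) (S : Finset (Fin (n+1)))
    (h0 : (0 : Fin (n+1)) ∈ S) :
    Pred (n+1) b b' S ↔ Pred n true b' (shift S) := by
  constructor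
  · rintro ⟨h1, _, h3⟩
    refine ⟨?_, by simp, ?_⟩
    · intro k hk1 hk2
      obtain ⟨i, hiS, hi⟩ := h1 (k+1) (by omega) (by omega)
      obtain ⟨j, rfl⟩ := exists_succ i (by omega)
      refine ⟨j, (mem_shift S j).2 hiS, ?_⟩
      simp only [Fin.val_succ] at hi; omega
    · intro hb'
      obtain ⟨i, hiS, hi⟩ := h3 hb'
      obtain ⟨j, rfl⟩ := exists_succ i (by omega)
      refine ⟨j, (mem_shift S j).2 hiS, ?_⟩
      simp only [Fin.val_succ] at hi; omega
  · rintro ⟨h1, _, h3⟩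
    refine ⟨?_, fun _ => ⟨0, h0, rfl⟩, ?_⟩
    · intro k hk1 hk2
      rcases eq_or_lt_of_le hk1 with h | h
      · exact ⟨0, h0, Or.inl (by simp only [Fin.val_zero]; omega)⟩
      · obtain ⟨j, hjT, hj⟩ := h1 (k-1) (by omega) (by omega)
        refine ⟨j.succ, (mem_shift S j).1 hjT, ?_⟩
        simp only [Fin.val_succ]; omega
    · intro hb'
      obtain ⟨j, hjT, hj⟩ := h3 hb'
      refine ⟨j.succ, (mem_shift S j).1 hjT, ?_⟩
      simp only [Fin.val_succ]; omega

lemma lemB {n : ℕ} (hn : 1 ≤ n) (b b' : Bool) (S : Finset (Fin (n+1)))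
    (h0 : (0 : Fin (n+1)) ∉ S) :
    Pred (n+1) b b' S ↔ b = true ∧ Pred n false b' (shift S) := by
  constructor
  · rintro ⟨h1, h2, h3⟩
    have hb : b = true := by
      by_contra h
      obtain ⟨i, hiS, hi⟩ := h2 (by simpa using h)
      have hi0 : i = 0 := by
        apply Fin.ext
        simpa using hi
      exact h0 (hi0 ▸ hiS)
    refine ⟨hb, ?_, ?_, ?_⟩
    · intro k hk1 hk2
      obtain ⟨i, hiS, hi⟩ := h1 (k+1) (by omega) (by omega)
      obtain ⟨j, rfl⟩ := exists_succ i (by omega)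
      refine ⟨j, (mem_shift S j).2 hiS, ?_⟩
      simp only [Fin.val_succ] at hi; omega
    · intro _
      obtain ⟨i, hiS, hi⟩ := h1 1 le_rfl (by omega)
      have hne : (i : ℕ) ≠ 0 := by
        intro h
        have hi0 : i = 0 := by
          apply Fin.ext
          simpa using h
        exact h0 (hi0 ▸ hiS)
      obtain ⟨j, rfl⟩ := exists_succ i hne
      refine ⟨j, (mem_shift S j).2 hiS, ?_⟩
      simp only [Fin.val_succ] at hi; omega
    · intro hb'
      obtain ⟨i, hiS, hi⟩ := h3 hb'
      obtain ⟨j, rfl⟩ := exists_succ i (by omega)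
      refine ⟨j, (mem_shift S j).2 hiS, ?_⟩
      simp only [Fin.val_succ] at hi; omega
  · rintro ⟨hb, h1, h2, h3⟩
    subst hb
    refine ⟨?_, by simp, ?_⟩
    · intro k hk1 hk2
      rcases eq_or_lt_of_le hk1 with h | h
      · obtain ⟨j, hjT, hj⟩ := h2 rfl
        refine ⟨j.succ, (mem_shift S j).1 hjT, ?_⟩
        simp only [Fin.val_succ]; omega
      · obtain ⟨j, hjT, hj⟩ := h1 (k-1) (by omega) (by omega)
        refine ⟨j.succ, (mem_shift S j).1 hjT, ?_⟩
        simp only [Fin.val_succ]; omega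
    · intro hb'
      obtain ⟨j, hjT, hj⟩ := h3 hb'
      refine ⟨j.succ, (mem_shift S j).1 hjT, ?_⟩
      simp only [Fin.val_succ]; omega

lemma shift_insert_map {n : ℕ} (T : Finset (Fin n)) :
    shift (insert 0 (T.map (Fin.succEmb n))) = T := by
  ext j
  simp [shift, Fin.succ_ne_zero, Fin.succ_inj]

lemma shift_map {n : ℕ} (T : Finset (Fin n)) :
    shift (T.map (Fin.succEmb n)) = T := by
  ext j
  simp [shift, Fin.succ_inj]

lemma insert_shift {n : ℕ} (S : Finset (Fin (n+1))) (h0 : (0 : Fin (n+1)) ∈ S) :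
    insert 0 ((shift S).map (Fin.succEmb n)) = S := by
  ext i
  simp only [Finset.mem_insert, Finset.mem_map, mem_shift]
  constructor
  · rintro (rfl | ⟨j, hj, rfl⟩)
    · exact h0
    · simpa using hj
  · intro hi
    rcases eq_or_ne i 0 with rfl | h
    · exact Or.inl rfl
    · obtain ⟨j, rfl⟩ := exists_succ i (by intro h'; exact h (Fin.ext (by rw [h']; simp)))
      exact Or.inr ⟨j, hi, rfl⟩

lemma map_shift {n : ℕ} (S : Finset (Fin (n+1))) (h0 : (0 : Fin (n+1)) ∉ S) :
    (shift S).map (Fin.succEmb n) = S := by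
  ext i
  simp only [Finset.mem_map, mem_shift]
  constructor
  · rintro ⟨j, hj, rfl⟩; simpa using hj
  · intro hi
    have h : i ≠ 0 := by rintro rfl; exact h0 hi
    obtain ⟨j, rfl⟩ := exists_succ i (by intro h'; exact h (Fin.ext (by rw [h']; simp)))
    exact ⟨j, hi, rfl⟩

lemma cardA (n : ℕ) (hn : 1 ≤ n) (b b' : Bool) :
    (Finset.univ.filter
      (fun S : Finset (Fin (n+1)) => Pred (n+1) b b' S ∧ (0 : Fin (n+1)) ∈ S)).card
      = cnt n true b' := by
  unfold cnt
  apply Finset.card_bij' (fun S _ => shift S)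
    (fun T _ => insert 0 (T.map (Fin.succEmb n)))
  · rintro S hS
    simp only [Finset.mem_filter, Finset.mem_univ, true_and] at hS ⊢
    exact (lemA hn b b' S hS.2).1 hS.1
  · rintro T hT
    simp only [Finset.mem_filter, Finset.mem_univ, true_and] at hT ⊢
    have h0 : (0 : Fin (n+1)) ∈ insert 0 (T.map (Fin.succEmb n)) := Finset.mem_insert_self _ _
    refine ⟨?_, h0⟩
    rw [lemA hn b b' _ h0, shift_insert_map]
    exact hT
  · rintro S hS
    simp only [Finset.mem_filter, Finset.mem_univ, true_and] at hS
    exact insert_shift S hS.2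
  · rintro T hT
    exact shift_insert_map T

lemma cardB (n : ℕ) (hn : 1 ≤ n) (b' : Bool) :
    (Finset.univ.filter
      (fun S : Finset (Fin (n+1)) => Pred (n+1) true b' S ∧ (0 : Fin (n+1)) ∉ S)).card
      = cnt n false b' := by
  unfold cnt
  apply Finset.card_bij' (fun S _ => shift S)
    (fun T _ => T.map (Fin.succEmb n))
  · rintro S hS
    simp only [Finset.mem_filter, Finset.mem_univ, true_and] at hS ⊢
    exact ((lemB hn true b' S hS.2).1 hS.1).2
  · rintro T hT
    simp only [Finset.mem_filter, Finset.mem_univ, true_and] at hT ⊢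
    have h0 : (0 : Fin (n+1)) ∉ T.map (Fin.succEmb n) := by
      simp [Fin.succ_ne_zero, eq_comm]
    refine ⟨?_, h0⟩
    rw [lemB hn true b' _ h0, shift_map]
    exact ⟨rfl, hT⟩
  · rintro S hS
    simp only [Finset.mem_filter, Finset.mem_univ, true_and] at hS
    exact map_shift S hS.2
  · rintro T hT
    exact shift_map T

lemma cardB0 (n : ℕ) (b' : Bool) :
    (Finset.univ.filter
      (fun S : Finset (Fin (n+1)) => Pred (n+1) false b' S ∧ (0 : Fin (n+1)) ∉ S)).card = 0 := by
  rw [Finset.card_eq_zero, Finset.filter_eq_empty_iff]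
  rintro S - ⟨⟨-, h2, -⟩, h0⟩
  obtain ⟨i, hiS, hi⟩ := h2 rfl
  have : i = 0 := Fin.ext (by rw [hi]; simp)
  exact h0 (this ▸ hiS)

lemma step (n : ℕ) (hn : 1 ≤ n) (b b' : Bool) :
    cnt (n+1) b b' = cnt n true b' + cond b (cnt n false b') 0 := by
  have key := Finset.card_filter_add_card_filter_not
    (s := Finset.univ.filter (Pred (n+1) b b')) (p := fun S => (0 : Fin (n+1)) ∈ S)
  rw [Finset.filter_filter, Finset.filter_filter] at key
  rw [cnt, ← key, cardA n hn b b']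
  cases b
  · rw [cardB0 n b']
    rfl
  · rw [cardB n hn b']
    rfl

lemma base (b b' : Bool) : cnt 1 b b' = Nat.fib (1 + cond b 1 0 + cond b' 1 0) := by
  have huniv : (Finset.univ : Finset (Fin 1)) = {0} := rfl
  have hmem : ∀ S : Finset (Fin 1), (0 : Fin 1) ∈ S → S = {0} := by
    intro S h
    apply Finset.Subset.antisymm
    · intro x hx
      have : x = 0 := Subsingleton.elim x 0
      simp [this]
    · simpa using h
  cases b <;> cases b' <;> unfold cnt <;> simp only [Bool.cond_false, Bool.cond_true]
  · -- false false
    rw [show Nat.fib (1 + 0 + 0) = 1 by decide]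
    rw [Finset.card_eq_one]
    refine ⟨{0}, ?_⟩
    ext S
    simp only [Finset.mem_filter, Finset.mem_univ, true_and, Finset.mem_singleton]
    constructor
    · rintro ⟨-, h2, -⟩
      obtain ⟨i, hiS, -⟩ := h2 rfl
      have : i = 0 := Subsingleton.elim i 0
      exact hmem S (this ▸ hiS)
    · rintro rfl
      exact ⟨fun k hk1 hk2 => by omega, fun _ => ⟨0, by simp⟩, fun _ => ⟨0, by simp⟩⟩
  · rw [show Nat.fib (1 + 0 + 1) = 1 by decide]
    rw [Finset.card_eq_one]
    refine ⟨{0}, ?_⟩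
    ext S
    simp only [Finset.mem_filter, Finset.mem_univ, true_and, Finset.mem_singleton]
    constructor
    · rintro ⟨-, h2, -⟩
      obtain ⟨i, hiS, -⟩ := h2 rfl
      have : i = 0 := Subsingleton.elim i 0
      exact hmem S (this ▸ hiS)
    · rintro rfl
      exact ⟨fun k hk1 hk2 => by omega, fun _ => ⟨0, by simp⟩, by simp⟩
  · rw [show Nat.fib (1 + 1 + 0) = 1 by decide]
    rw [Finset.card_eq_one]
    refine ⟨{0}, ?_⟩
    ext S
    simp only [Finset.mem_filter, Finset.mem_univ, true_and, Finset.mem_singleton]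
    constructor
    · rintro ⟨-, -, h3⟩
      obtain ⟨i, hiS, -⟩ := h3 rfl
      have : i = 0 := Subsingleton.elim i 0
      exact hmem S (this ▸ hiS)
    · rintro rfl
      exact ⟨fun k hk1 hk2 => by omega, by simp, fun _ => ⟨0, by simp⟩⟩
  · rw [show Nat.fib (1 + 1 + 1) = 2 by decide]
    rw [Finset.filter_true_of_mem]
    · simp [Finset.card_univ]
    · intro S _
      exact ⟨fun k hk1 hk2 => by omega, by simp, by simp⟩

lemma main (n : ℕ) (hn : 1 ≤ n) : ∀ b b' : Bool,
    cnt n b b' = Nat.fib (n + cond b 1 0 + cond b' 1 0) := by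
  induction n with
  | zero => omega
  | succ m ih =>
    intro b b'
    rcases Nat.lt_or_ge m 1 with hm | hm
    · interval_cases m
      exact base b b'
    · rw [step m hm b b', ih hm true b', ih hm false b']
      have h1 : Nat.fib (m + 2) = Nat.fib m + Nat.fib (m + 1) := Nat.fib_add_two
      have h2 : Nat.fib (m + 3) = Nat.fib (m + 1) + Nat.fib (m + 2) :=
        Nat.fib_add_two (n := m + 1)
      cases b <;> cases b' <;>
        simp only [Bool.cond_false, Bool.cond_true, Nat.add_zero]
      · show Nat.fib (m + 1) + Nat.fib m = Nat.fib (m + 2)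
        omega
      · show Nat.fib (m + 2) + Nat.fib (m + 1) = Nat.fib (m + 3)
        omega

noncomputable def pathEdgeCoverProbHalf (n : ℕ) (b b' : Bool) : ℝ :=
  ((Finset.univ.filter
      (fun S : Finset (Fin n) =>
        (∀ k : ℕ, 1 ≤ k → k ≤ n - 1 → ∃ i ∈ S, (i : ℕ) = k - 1 ∨ (i : ℕ) = k) ∧
        (b = false → ∃ i ∈ S, (i : ℕ) = 0) ∧
        (b' = false → ∃ i ∈ S, (i : ℕ) = n - 1))).card : ℝ) / 2 ^ n

/-- For all `n ≥ 1` and `b, b' ∈ {0,1}`, the probability that a uniformly random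
edge subset of the path with `n` edges is an edge cover (with the endpoint
exemptions given by `b` and `b'`) equals `f_{n+b+b'} / 2^n`. -/
theorem edge_cover_prob_path_half (n : ℕ) (hn : 1 ≤ n) (b b' : Bool) :
    pathEdgeCoverProbHalf n b b' =
      (Nat.fib (n + (cond b 1 0) + (cond b' 1 0)) : ℝ) / 2 ^ n := by
  have h : pathEdgeCoverProbHalf n b b' = (cnt n b b' : ℝ) / 2 ^ n := by
    unfold pathEdgeCoverProbHalf cnt Pred
    congr 1
    norm_cast
    congr 1
    ext S
    simp only [Finset.mem_filter]
  rw [h, main n hn b b']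
end
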